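/- arXiv:1012.1786 — 2 statements merged into one kernel-verified Lean document; each statement's English description precedes it below -/
import Mathlib

section
/- A topological toric manifold is simply connected. -/
noncomputable section

open Complex Finset

/-- `g^μ` for `μ = (b + c·i, v) ∈ ℂ × ℤ`: `|g|^(b+ci) · (g/|g|)^v`. -/
noncomputable def cpw (b c : ℝ) (v : ℤ) (g : ℂ) : ℂ :=
  (((‖g‖ : ℝ) : ℂ) ^ ((b : ℂ) + (c : ℂ) * Complex.I)) * (g / ((‖g‖ : ℝ) : ℂ)) ^ v

/-- `g^μ` where `μ` is encoded as a triple `(b, c, v) : ℝ × ℝ × ℤ`. -/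
noncomputable def cpwT (t : ℝ × ℝ × ℤ) (g : ℂ) : ℂ := cpw t.1 t.2.1 t.2.2 g

/-- The product `μ₂μ₁ = (b₁b₂, b₁c₂ + c₁v₂, v₁v₂)` in the ring `𝓡 ≅ ℂ × ℤ`. -/
def rmul (μ₂ μ₁ : ℝ × ℝ × ℤ) : ℝ × ℝ × ℤ :=
  (μ₁.1 * μ₂.1, μ₁.1 * μ₂.2.1 + μ₁.2.1 * (μ₂.2.2 : ℝ), μ₁.2.2 * μ₂.2.2)

/-- The identity element of `𝓡`. -/
def rone : ℝ × ℝ × ℤ := (1, 0, 1)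

/-- `⟨α, β⟩ = Σₖ αᵏ βᵏ ∈ 𝓡`. -/
def rinner {n : ℕ} (α β : Fin n → ℝ × ℝ × ℤ) : ℝ × ℝ × ℤ :=
  ∑ k, rmul (α k) (β k)

/-- `χ^α(g₁, …, gₙ) = ∏ₖ gₖ^{αᵏ}`. -/
noncomputable def chi {n : ℕ} (α : Fin n → ℝ × ℝ × ℤ) (g : Fin n → ℂ) : ℂ :=
  ∏ k, cpwT (α k) (g k)

/-- A (compact) topological toric manifold of dimension `2n`: a compact Hausdorff space with
an effective continuous action of `(ℂ*)ⁿ` having a dense orbit, covered by finitely many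
invariant open subsets, each equivariantly homeomorphic to a direct sum of complex
one-dimensional smooth representation spaces of `(ℂ*)ⁿ` (i.e. to `ℂⁿ` where the `k`-th
coordinate is acted on through the smooth character `χ^{α_k}`). -/
structure TopToricManifold (n : ℕ) where
  X : Type
  [ts : TopologicalSpace X]
  [t2 : T2Space X]
  [cpt : CompactSpace X]
  smul : (Fin n → ℂˣ) → X → X
  one_smul : ∀ x, smul 1 x = x
  mul_smul : ∀ g h x, smul (g * h) x = smul g (smul h x)
  continuous_smul : Continuous fun p : ((Fin n → ℂˣ) × X) => smul p.1 p.2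
  effective : ∀ g, (∀ x, smul g x = x) → g = 1
  denseOrbit : ∃ x₀, Dense (Set.range fun g => smul g x₀)
  ι : Type
  finite_ι : Finite ι
  U : ι → Set X
  isOpen_U : ∀ i, IsOpen (U i)
  invariant_U : ∀ i g x, x ∈ U i → smul g x ∈ U i
  cover_U : ∀ x, ∃ i, x ∈ U i
  charts : ∀ i : ι, ∃ α : Fin n → (Fin n → ℝ × ℝ × ℤ),
    ∃ e : (U i) ≃ₜ (Fin n → ℂ),
      ∀ g (x : U i), e ⟨smul g x, invariant_U i g x x.2⟩ =
        fun k => chi (α k) (fun j => ((g j : ℂ))) * e x k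

/-!
The orbit `O` of `x₀` is the image of the path-connected group `(ℂˣ)ⁿ`; being dense, it meets
every chart `U i`, which is open, nonempty and invariant, so `O ⊆ U i` for all `i`. Since the space
is locally `ℂⁿ`, every point of the open set `U i ∩ U j` can be joined inside it to the dense set
`O`, so all pairwise intersections of charts are path connected. The charts are contractible, and a
space covered by simply connected open sets through a common point with path-connected pairwise
intersections is simply connected: subdivide a path along the cover and, chart after chart, replace
the part already traversed by a path inside the next chart.
-/

open Set Topology

section

variable {X : Type*} [TopologicalSpace X]

theorem IsSimplyConnected.homotopic {s : Set X} (hs : IsSimplyConnected s) {x y : X}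
    {p q : Path x y} (hp : range p ⊆ s) (hq : range q ⊆ s) : p.Homotopic q := by
  have := hs.simplyConnectedSpace
  lift x to s using hp ⟨0, p.source⟩
  lift y to s using hp ⟨1, p.target⟩
  let restrict (r : Path (x : X) y) (hr : range r ⊆ s) : Path x y :=
    { toFun := fun t => ⟨r t, hr ⟨t, rfl⟩⟩
      source' := Subtype.ext r.source
      target' := Subtype.ext r.target }
  exact (SimplyConnectedSpace.paths_homotopic (restrict p hp) (restrict q hq)).map
    ⟨Subtype.val, continuous_subtype_val⟩

theorem IsSimplyConnected.exists_homotopic_of_isPathConnected_inter {s t : Set X}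
    (hs : IsSimplyConnected s) (hst : IsPathConnected (s ∩ t)) {x y : X} {p : Path x y}
    (hp : range p ⊆ s) (hx : x ∈ t) (hy : y ∈ t) :
    ∃ q : Path x y, range q ⊆ t ∧ p.Homotopic q := by
  obtain ⟨q, hq⟩ := hst.joinedIn x ⟨hp ⟨0, p.source⟩, hx⟩ y ⟨hp ⟨1, p.target⟩, hy⟩
  exact ⟨q, range_subset_iff.2 fun r => (hq r).2,
    hs.homotopic hp (range_subset_iff.2 fun r => (hq r).1)⟩

theorem simplyConnectedSpace_of_forall_homotopic [PathConnectedSpace X] (x₀ : X)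
    (h : ∀ {y : X} (p q : Path x₀ y), p.Homotopic q) : SimplyConnectedSpace X := by
  refine simply_connected_iff_paths_homotopic'.2 ⟨inferInstance, fun {x y} p q => ?_⟩
  let e := PathConnectedSpace.somePath x₀ x
  have hpq := Path.Homotopic.Quotient.eq.2 (h (e.trans p) (e.trans q))
  rw [← Path.Homotopic.Quotient.eq]
  simp only [Path.Homotopic.Quotient.mk_trans] at hpq
  open Path.Homotopic.Quotient in
  calc mk p = trans (symm (mk e)) (trans (mk e) (mk p)) := by
        rw [← trans_assoc, symm_trans, refl_trans]
    _ = mk q := by rw [hpq, ← trans_assoc, symm_trans, refl_trans]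

theorem Dense.exists_joinedIn [LocallyPathConnectedSpace X] {D V : Set X} (hD : Dense D)
    (hV : IsOpen V) {x : X} (hx : x ∈ V) : ∃ z ∈ D, JoinedIn V x z :=
  hD.exists_mem_open (hV.pathComponentIn x) ⟨x, mem_pathComponentIn_self hx⟩

variable {ι : Type*} {U : ι → Set X} {x₀ : X}

theorem LocallyPathConnectedSpace.of_isOpen_cover (hU : ∀ i, IsOpen (U i))
    (hcover : ∀ x, ∃ i, x ∈ U i) (h : ∀ i, LocallyPathConnectedSpace (U i)) :
    LocallyPathConnectedSpace X := by
  refine locallyPathConnectedSpace_iff_pathComponentIn_mem_nhds.2 fun x V hV hxV => ?_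
  obtain ⟨i, hxi⟩ := hcover x
  have hloc : pathComponentIn (Subtype.val ⁻¹' V) (⟨x, hxi⟩ : U i) ∈ 𝓝 ⟨x, hxi⟩ :=
    pathComponentIn_mem_nhds ((hV.preimage continuous_subtype_val).mem_nhds hxV)
  refine Filter.mem_of_superset ((hU i).isOpenMap_subtype_val.image_mem_nhds hloc) ?_
  rintro _ ⟨y, hy, rfl⟩
  exact (JoinedIn.map hy continuous_subtype_val).mono (image_preimage_subset _ _)

theorem exists_homotopic_range_subset_of_isOpen_cover (hU : ∀ i, IsOpen (U i))
    (hcover : ∀ x, ∃ i, x ∈ U i) (hsc : ∀ i, IsSimplyConnected (U i)) (hx₀ : ∀ i, x₀ ∈ U i)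
    (hconn : ∀ i j, IsPathConnected (U i ∩ U j)) {y : X} (γ : Path x₀ y) :
    ∃ i, ∃ c : Path x₀ y, range c ⊆ U i ∧ γ.Homotopic c := by
  obtain ⟨t, ht₀, ht_mono, ⟨m, htm⟩, ht_sub⟩ := exists_monotone_Icc_subset_open_cover_unitInterval
    (fun i => (hU i).preimage γ.continuous) fun s _ => mem_iUnion.2 (hcover (γ s))
  choose idx hidx using ht_sub
  have hγ₀ : ∀ i, γ 0 ∈ U i := fun i => by rw [γ.source]; exact hx₀ i
  -- Passing from `U (idx k)` to `U (idx (k + 1))` only needs both endpoints in their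
  -- path-connected intersection; the start point is there because `x₀` lies in every `U i`.
  have initial_segment : ∀ k, ∃ c : Path (γ 0) (γ (t k)),
      range c ⊆ U (idx k) ∧ (γ.subpath 0 (t k)).Homotopic c := by
    intro k
    induction k with
    | zero =>
      rw [ht₀, Path.subpath_self]
      exact ⟨Path.refl _, by simpa using hγ₀ _, .refl _⟩
    | succ k ih =>
      obtain ⟨c, hcU, hc⟩ := ih
      have hpiece : range (γ.subpath (t k) (t (k + 1))) ⊆ U (idx k) := by
        rw [Path.range_subpath_of_le _ _ _ (ht_mono k.le_succ)]
        exact image_subset_iff.2 (hidx k)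
      obtain ⟨d, hdU, hd⟩ := (hsc (idx k)).exists_homotopic_of_isPathConnected_inter
        (hconn (idx k) (idx (k + 1))) (p := c.trans (γ.subpath (t k) (t (k + 1))))
        (by rw [Path.trans_range]; exact union_subset hcU hpiece) (hγ₀ _)
        (hidx (k + 1) ⟨le_rfl, ht_mono (k + 1).le_succ⟩)
      have hsplit : ((γ.subpath 0 (t k)).trans (γ.subpath (t k) (t (k + 1)))).Homotopic
          (γ.subpath 0 (t (k + 1))) := ⟨.subpathTransSubpath γ 0 (t k) (t (k + 1))⟩
      exact ⟨d, hdU, hsplit.symm.trans ((hc.hcomp (.refl _)).trans hd)⟩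
  have hend := initial_segment m
  rw [htm m le_rfl, Path.subpath_zero_one] at hend
  obtain ⟨c, hcU, hc⟩ := hend
  exact ⟨idx m, c.cast γ.source.symm γ.target.symm, by simpa using hcU,
    hc.pathCast γ.source.symm γ.target.symm⟩

theorem simplyConnectedSpace_of_isOpen_cover (hU : ∀ i, IsOpen (U i))
    (hcover : ∀ x, ∃ i, x ∈ U i) (hsc : ∀ i, IsSimplyConnected (U i)) (hx₀ : ∀ i, x₀ ∈ U i)
    (hconn : ∀ i j, IsPathConnected (U i ∩ U j)) : SimplyConnectedSpace X := by
  have : PathConnectedSpace X := by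
    have hjoined (x : X) : Joined x₀ x := by
      obtain ⟨i, hx⟩ := hcover x
      exact ((hsc i).isPathConnected.joinedIn x₀ (hx₀ i) x hx).joined
    exact ⟨⟨x₀⟩, fun x y => (hjoined x).symm.trans (hjoined y)⟩
  refine simplyConnectedSpace_of_forall_homotopic x₀ fun p q => ?_
  obtain ⟨i, c, hcU, hpc⟩ := exists_homotopic_range_subset_of_isOpen_cover hU hcover hsc hx₀ hconn p
  obtain ⟨j, d, hdU, hqd⟩ := exists_homotopic_range_subset_of_isOpen_cover hU hcover hsc hx₀ hconn q
  obtain ⟨c', hc'U, hcc'⟩ := (hsc i).exists_homotopic_of_isPathConnected_inter (hconn i j) hcU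
    (hx₀ j) (hdU ⟨1, d.target⟩)
  exact hpc.trans (hcc'.trans ((hsc j).homotopic hc'U hdU |>.trans hqd.symm))

end

attribute [local instance] TopToricManifold.ts

namespace TopToricManifold

variable {n : ℕ} (M : TopToricManifold n)

theorem isPathConnected_orbit (x : M.X) : IsPathConnected (range fun g => M.smul g x) :=
  isPathConnected_range (M.continuous_smul.comp (continuous_id.prodMk continuous_const))

theorem isSimplyConnected_U (i : M.ι) : IsSimplyConnected (M.U i) := by
  obtain ⟨-, e, -⟩ := M.charts i
  have := e.contractibleSpace
  exact SimplyConnectedSpace.ofContractible _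

theorem locallyPathConnectedSpace : LocallyPathConnectedSpace M.X :=
  .of_isOpen_cover M.isOpen_U M.cover_U fun i => by
    obtain ⟨-, e, -⟩ := M.charts i
    exact e.isOpenEmbedding.locallyPathConnectedSpace

variable {x₀ : M.X}

theorem orbit_subset_U (hdense : Dense (range fun g => M.smul g x₀)) (i : M.ι) :
    (range fun g => M.smul g x₀) ⊆ M.U i := by
  obtain ⟨-, e, -⟩ := M.charts i
  obtain ⟨_, ⟨g, rfl⟩, hg⟩ := hdense.exists_mem_open (M.isOpen_U i) ⟨_, (e.symm 0).2⟩
  rintro _ ⟨h, rfl⟩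
  simpa [← M.mul_smul] using M.invariant_U i (h * g⁻¹) _ hg

theorem isPathConnected_U_inter (hdense : Dense (range fun g => M.smul g x₀)) (i j : M.ι) :
    IsPathConnected (M.U i ∩ M.U j) := by
  have hO := subset_inter (M.orbit_subset_U hdense i) (M.orbit_subset_U hdense j)
  have hx₀ : x₀ ∈ range fun g => M.smul g x₀ := ⟨1, M.one_smul x₀⟩
  have := M.locallyPathConnectedSpace
  refine ⟨x₀, hO hx₀, fun {x} hx => ?_⟩
  obtain ⟨z, hzO, hxz⟩ := hdense.exists_joinedIn ((M.isOpen_U i).inter (M.isOpen_U j)) hx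
  exact (hxz.trans (((M.isPathConnected_orbit x₀).joinedIn z hzO x₀ hx₀).mono hO)).symm

end TopToricManifold

/-- a topological toric manifold is simply connected. -/
theorem topToricManifold_simplyConnected (n : ℕ) (M : TopToricManifold n) :
    @SimplyConnectedSpace M.X M.ts := by
  obtain ⟨x₀, hdense⟩ := M.denseOrbit
  exact simplyConnectedSpace_of_isOpen_cover M.isOpen_U M.cover_U M.isSimplyConnected_U
    (fun i => M.orbit_subset_U hdense i ⟨1, M.one_smul x₀⟩) (M.isPathConnected_U_inter hdense)

end
end

section
/- The quotient space X(Δ) = U(Σ)/Ker λ associated to a complete non-singular topological fan Δ is Hausdorff. -/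
noncomputable section

open Complex Finset

/-- The cone spanned by the vectors `b i`, `i ∈ I`. -/
def coneOf {n : ℕ} (m : ℕ) (b : Fin m → (Fin n → ℝ)) (I : Finset (Fin m)) :
    Set (Fin n → ℝ) :=
  {x | ∃ r : Fin m → ℝ, (∀ i, 0 ≤ r i) ∧ (∀ i ∉ I, r i = 0) ∧ x = ∑ i, r i • b i}

/-- A complete non-singular (simplicial) topological fan of dimension `n` on the vertex set
`[m]`: an abstract simplicial complex `cx` on `Fin m` together with
`β : Fin m → 𝓡ⁿ = ℂⁿ × ℤⁿ`, `β i = (bᵢ + i·cᵢ, vᵢ)` (encoded componentwise by triples in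
`ℝ × ℝ × ℤ`), such that the cones `∠b_I`, `I ∈ cx`, form a complete ordinary simplicial fan
and each `{vᵢ}_{i ∈ I}` is part of a `ℤ`-basis of `ℤⁿ` (rows of a unimodular matrix). -/
structure CompleteNonsingularTopFan (n m : ℕ) where
  cx : Finset (Finset (Fin m))
  β : Fin m → Fin n → ℝ × ℝ × ℤ
  down_closed : ∀ I ∈ cx, ∀ J ⊆ I, J ∈ cx
  vertices : ∀ i : Fin m, {i} ∈ cx
  indep : ∀ I ∈ cx, LinearIndependent ℝ (fun i : I => fun k => (β i k).1)
  cone_inter : ∀ I ∈ cx, ∀ J ∈ cx,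
    coneOf m (fun i k => (β i k).1) I ∩ coneOf m (fun i k => (β i k).1) J =
      coneOf m (fun i k => (β i k).1) (I ∩ J)
  complete : (⋃ I ∈ cx, coneOf m (fun i k => (β i k).1) I) = Set.univ
  nonsingular : ∀ I ∈ cx, ∃ (C : Matrix (Fin n) (Fin n) ℤ) (ρ : Fin m → Fin n),
    IsUnit C.det ∧ Set.InjOn ρ (I : Set (Fin m)) ∧ ∀ i ∈ I, ∀ k, C (ρ i) k = (β i k).2.2

/-- The homomorphism `λ : (ℂ*)ᵐ → (ℂ*)ⁿ`, `λ(h₁,…,hₘ) = ∏ₖ λ_{βₖ}(hₖ)`, written on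
`j`-th coordinates: `λ(h)ⱼ = ∏ₖ hₖ^{βₖʲ}`. -/
noncomputable def lamMap {n m : ℕ} (β : Fin m → Fin n → ℝ × ℝ × ℤ) (h : Fin m → ℂ) :
    Fin n → ℂ :=
  fun j => ∏ k, cpwT (β k j) (h k)

/-- `U(Σ) = ⋃_{I ∈ Σ} U(I) ⊆ ℂᵐ`. -/
def USigma {n m : ℕ} (Δ : CompleteNonsingularTopFan n m) : Set (Fin m → ℂ) :=
  ⋃ I ∈ Δ.cx, {z : Fin m → ℂ | ∀ k ∉ I, z k ≠ 0}

/-- The relation on `U(Σ)` identifying points in the same `Ker λ`-orbit; the quotient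
`Quot (orbitRel Δ)` is the space `X(Δ) = U(Σ)/Ker λ` with the quotient topology. -/
def orbitRel {n m : ℕ} (Δ : CompleteNonsingularTopFan n m)
    (z w : USigma Δ) : Prop :=
  ∃ h : Fin m → ℂ, (∀ k, h k ≠ 0) ∧ (lamMap Δ.β h = fun _ => 1) ∧
    ∀ k, (w : Fin m → ℂ) k = h k * (z : Fin m → ℂ) k

/-!
Points of `U(Σ)` are compared through their zero sets. If `z` vanishes at a coordinate `i₀` where
`w` does not, the cones of the zero sets `I ∋ i₀` of `z` and `J` of `w` meet in their common face,
so Farkas' lemma gives a linear form `f` with `f ≤ 0` on `b_I`, `f ≥ 0` on `b_J` and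
`f (b i₀) < 0`. With `t = f ∘ b`, the functions `P = ∏ ‖xₖ‖ ^ tₖ⁺` and `Q = ∏ ‖xₖ‖ ^ tₖ⁻` get
multiplied by the same positive factor under `Ker λ`, because `∑ₖ log ‖hₖ‖ • bₖ = 0` on `Ker λ`;
hence `Q / (P + Q)` is invariant, and it vanishes at `z` but not at `w`.

If `z` and `w` have the same zero set `S`, then `w = g z` for some `g ∈ (ℂ*)ᵐ`, and `z ∼ w` iff
`λ(g) ∈ λ((ℂ*)^S)`. That subgroup is the common kernel of the characters `χ^α` of `(ℂ*)ⁿ` with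
`⟨α, βᵢ⟩ = 0` for `i ∈ S`: independence of the `bᵢ` handles the moduli and unimodularity of the
`vᵢ` the phases. For such `α`, `x ↦ ∏ₖ xₖ ^ ⟨α, βₖ⟩` is continuous and `Ker λ`-invariant on
`{x | xₖ ≠ 0 for k ∉ S}`, and its value at `w` is `χ^α(λ(g))` times its value at `z`.
-/

open PointedCone

section Exponents

/-- The exponent of `cpwT μ` in logarithmic coordinates, see `cpwT_exp`. -/
def rsmul (μ : ℝ × ℝ × ℤ) (w : ℂ) : ℂ :=
  w.re * μ.1 + (w.re * μ.2.1 + w.im * μ.2.2) * I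

@[simp] lemma rsmul_re (μ : ℝ × ℝ × ℤ) (w : ℂ) : (rsmul μ w).re = w.re * μ.1 := by
  simp [rsmul]

@[simp] lemma rsmul_im (μ : ℝ × ℝ × ℤ) (w : ℂ) :
    (rsmul μ w).im = w.re * μ.2.1 + w.im * μ.2.2 := by
  simp [rsmul]

@[simp] lemma rsmul_zero (μ : ℝ × ℝ × ℤ) : rsmul μ 0 = 0 := by
  simp [rsmul]

lemma rsmul_rsmul (μ₂ μ₁ : ℝ × ℝ × ℤ) (w : ℂ) :
    rsmul μ₂ (rsmul μ₁ w) = rsmul (rmul μ₂ μ₁) w := by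
  apply Complex.ext <;> simp [rmul] <;> ring

lemma rsmul_sum {ι : Type*} (s : Finset ι) (μ : ι → ℝ × ℝ × ℤ) (w : ℂ) :
    rsmul (∑ j ∈ s, μ j) w = ∑ j ∈ s, rsmul (μ j) w := by
  apply Complex.ext <;> simp [Prod.fst_sum, Prod.snd_sum, Finset.mul_sum, Finset.sum_add_distrib]

lemma cpwT_exp (μ : ℝ × ℝ × ℤ) (w : ℂ) : cpwT μ (exp w) = exp (rsmul μ w) := by
  have hnorm : ((‖exp w‖ : ℝ) : ℂ) = exp w.re := by
    rw [Complex.norm_exp, Complex.ofReal_exp]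
  have hphase : exp w / exp w.re = exp (w.im * I) := by
    rw [← Complex.exp_sub]; congr 1; apply Complex.ext <;> simp
  rw [cpwT, cpw, hnorm, hphase, Complex.cpow_def_of_ne_zero (Complex.exp_ne_zero _),
    Complex.log_exp (by simpa using Real.pi_pos) (by simpa using Real.pi_pos.le),
    ← Complex.exp_int_mul, ← Complex.exp_add, rsmul]
  congr 1
  ring

lemma cpwT_of_ne_zero (μ : ℝ × ℝ × ℤ) {g : ℂ} (hg : g ≠ 0) :
    cpwT μ g = exp (rsmul μ (log g)) := by
  rw [← cpwT_exp, Complex.exp_log hg]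

lemma cpwT_ne_zero (μ : ℝ × ℝ × ℤ) {g : ℂ} (hg : g ≠ 0) : cpwT μ g ≠ 0 := by
  rw [cpwT_of_ne_zero μ hg]
  exact Complex.exp_ne_zero _

lemma cpwT_zero_left (g : ℂ) : cpwT 0 g = 1 := by
  simp [cpwT, cpw]

lemma cpwT_zero_right {μ : ℝ × ℝ × ℤ} (hμ : μ ≠ 0) : cpwT μ 0 = 0 := by
  obtain ⟨b, c, v⟩ := μ
  simp only [cpwT, cpw, norm_zero, Complex.ofReal_zero, zero_div]
  by_cases hbc : (b : ℂ) + c * I = 0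
  · have hb : b = 0 := by simpa using congrArg Complex.re hbc
    have hc : c = 0 := by simpa using congrArg Complex.im hbc
    have hv : v ≠ 0 := by rintro rfl; exact hμ (by simp [hb, hc])
    rw [zero_zpow v hv, mul_zero]
  · rw [Complex.zero_cpow hbc, zero_mul]

lemma cpwT_one (μ : ℝ × ℝ × ℤ) : cpwT μ 1 = 1 := by
  rw [← Complex.exp_zero, cpwT_exp]
  simp [rsmul]

lemma cpwT_mul (μ : ℝ × ℝ × ℤ) {g : ℂ} (hg : g ≠ 0) (g' : ℂ) :
    cpwT μ (g * g') = cpwT μ g * cpwT μ g' := by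
  rcases eq_or_ne μ 0 with rfl | hμ
  · simp [cpwT_zero_left]
  rcases eq_or_ne g' 0 with rfl | hg'
  · simp [cpwT_zero_right hμ]
  rw [← Complex.exp_log hg, ← Complex.exp_log hg', ← Complex.exp_add, cpwT_exp, cpwT_exp,
    cpwT_exp, ← Complex.exp_add]
  congr 1
  apply Complex.ext <;> simp <;> ring

lemma cpwT_cpwT (μ₂ μ₁ : ℝ × ℝ × ℤ) {g : ℂ} (hg : g ≠ 0) :
    cpwT μ₂ (cpwT μ₁ g) = cpwT (rmul μ₂ μ₁) g := by
  rw [cpwT_of_ne_zero μ₁ hg, cpwT_exp, cpwT_of_ne_zero _ hg, rsmul_rsmul]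

lemma cpwT_sum {ι : Type*} (s : Finset ι) (μ : ι → ℝ × ℝ × ℤ) {g : ℂ} (hg : g ≠ 0) :
    cpwT (∑ j ∈ s, μ j) g = ∏ j ∈ s, cpwT (μ j) g := by
  simp_rw [cpwT_of_ne_zero _ hg, rsmul_sum, Complex.exp_sum]

lemma cpwT_prod {ι : Type*} (μ : ℝ × ℝ × ℤ) (s : Finset ι) {g : ι → ℂ} (hg : ∀ i, g i ≠ 0) :
    cpwT μ (∏ i ∈ s, g i) = ∏ i ∈ s, cpwT μ (g i) := by
  induction s using Finset.cons_induction with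
  | empty => simp [cpwT_one]
  | cons a s _ ih => rw [Finset.prod_cons, Finset.prod_cons, cpwT_mul _ (hg a), ih]

lemma norm_cpwT (μ : ℝ × ℝ × ℤ) {g : ℂ} (hg : g ≠ 0) : ‖cpwT μ g‖ = ‖g‖ ^ μ.1 := by
  rw [cpwT_of_ne_zero μ hg, Complex.norm_exp, rsmul_re, Complex.log_re,
    Real.rpow_def_of_pos (norm_pos_iff.mpr hg)]

lemma continuousAt_cpwT (μ : ℝ × ℝ × ℤ) {g : ℂ} (hg : g ≠ 0) : ContinuousAt (cpwT μ) g := by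
  have hnorm : ContinuousAt (fun y : ℂ => ((‖y‖ : ℝ) : ℂ)) g :=
    (Complex.continuous_ofReal.comp continuous_norm).continuousAt
  have hnorm0 : ((‖g‖ : ℝ) : ℂ) ≠ 0 := by simpa using hg
  exact (hnorm.cpow continuousAt_const (Or.inl (by simpa using norm_pos_iff.mpr hg))).mul
    ((continuousAt_id.div hnorm hnorm0).zpow₀ _ (Or.inl (div_ne_zero hg hnorm0)))

end Exponents

/-- The paper's `U(I)`. -/
def UOf {m : ℕ} (I : Finset (Fin m)) : Set (Fin m → ℂ) := {z | ∀ k ∉ I, z k ≠ 0}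

lemma isOpen_UOf {m : ℕ} (I : Finset (Fin m)) : IsOpen (UOf I) := by
  simp only [UOf, Set.ofPred_forall]
  exact isOpen_iInter_of_finite fun k => isOpen_iInter_of_finite fun _ =>
    isOpen_ne_fun (continuous_apply k) continuous_const

lemma mul_mem_UOf_iff {m : ℕ} {I : Finset (Fin m)} {h : Fin m → ℂ} (hh : ∀ k, h k ≠ 0)
    {x : Fin m → ℂ} : h * x ∈ UOf I ↔ x ∈ UOf I := by
  simp [UOf, hh]

section Characters

variable {n m : ℕ}

lemma chi_mul (μ : Fin n → ℝ × ℝ × ℤ) {h : Fin n → ℂ} (hh : ∀ j, h j ≠ 0) (x : Fin n → ℂ) :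
    chi μ (h * x) = chi μ h * chi μ x := by
  simp only [chi, Pi.mul_apply, cpwT_mul _ (hh _), Finset.prod_mul_distrib]

lemma chi_one (μ : Fin n → ℝ × ℝ × ℤ) : chi μ 1 = 1 := by
  simp [chi, cpwT_one]

lemma lamMap_ne_zero (β : Fin m → Fin n → ℝ × ℝ × ℤ) {h : Fin m → ℂ} (hh : ∀ k, h k ≠ 0)
    (j : Fin n) : lamMap β h j ≠ 0 :=
  Finset.prod_ne_zero_iff.mpr fun k _ => cpwT_ne_zero _ (hh k)

lemma lamMap_mul (β : Fin m → Fin n → ℝ × ℝ × ℤ) {h : Fin m → ℂ} (hh : ∀ k, h k ≠ 0)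
    (x : Fin m → ℂ) : lamMap β (h * x) = lamMap β h * lamMap β x := by
  funext j
  simp only [lamMap, Pi.mul_apply, cpwT_mul _ (hh _), Finset.prod_mul_distrib]

lemma chi_lamMap (α : Fin n → ℝ × ℝ × ℤ) (β : Fin m → Fin n → ℝ × ℝ × ℤ) {h : Fin m → ℂ}
    (hh : ∀ k, h k ≠ 0) : chi α (lamMap β h) = chi (fun k => rinner α (β k)) h := by
  simp only [chi, lamMap, rinner]
  calc ∏ j, cpwT (α j) (∏ k, cpwT (β k j) (h k))
      = ∏ j, ∏ k, cpwT (α j) (cpwT (β k j) (h k)) := by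
        simp only [cpwT_prod _ _ fun k => cpwT_ne_zero _ (hh k)]
    _ = ∏ k, ∏ j, cpwT (rmul (α j) (β k j)) (h k) := by
        rw [Finset.prod_comm]
        simp only [cpwT_cpwT _ _ (hh _)]
    _ = ∏ k, cpwT (∑ j, rmul (α j) (β k j)) (h k) := by
        simp only [cpwT_sum _ _ (hh _)]

lemma chi_rinner_mul_of_lamMap_eq_one (α : Fin n → ℝ × ℝ × ℤ)
    (β : Fin m → Fin n → ℝ × ℝ × ℤ) {h : Fin m → ℂ} (hh : ∀ k, h k ≠ 0)
    (hker : lamMap β h = 1) (x : Fin m → ℂ) :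
    chi (fun k => rinner α (β k)) (h * x) = chi (fun k => rinner α (β k)) x := by
  rw [chi_mul _ hh, ← chi_lamMap α β hh, hker, chi_one, one_mul]

lemma chi_exp (α : Fin n → ℝ × ℝ × ℤ) (W : Fin n → ℂ) :
    chi α (fun j => exp (W j)) = exp (∑ j, rsmul (α j) (W j)) := by
  simp only [chi, cpwT_exp, Complex.exp_sum]

lemma lamMap_exp (β : Fin m → Fin n → ℝ × ℝ × ℤ) (w : Fin m → ℂ) (j : Fin n) :
    lamMap β (fun k => exp (w k)) j = exp (∑ k, rsmul (β k j) (w k)) := by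
  simp only [lamMap, cpwT_exp, Complex.exp_sum]

lemma chi_triple_exp (a γ : Fin n → ℝ) (ξ : Fin n → ℤ) (W : Fin n → ℂ) :
    chi (fun j => (a j, γ j, ξ j)) (fun j => exp (W j)) =
      exp (((fun j => (W j).re) ⬝ᵥ a : ℝ) +
        (((fun j => (W j).re) ⬝ᵥ γ + (fun j => (W j).im) ⬝ᵥ (fun j => (ξ j : ℝ)) : ℝ)) * I) := by
  rw [chi_exp]
  congr 1
  simp [rsmul, dotProduct, Finset.sum_add_distrib, ← Finset.sum_mul]

lemma chi_ne_zero (μ : Fin m → ℝ × ℝ × ℤ) {x : Fin m → ℂ} (hx : ∀ k, x k = 0 → μ k = 0) :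
    chi μ x ≠ 0 := by
  refine Finset.prod_ne_zero_iff.mpr fun k _ => ?_
  rcases eq_or_ne (x k) 0 with hk | hk
  · rw [hx k hk, cpwT_zero_left]
    exact one_ne_zero
  · exact cpwT_ne_zero _ hk

lemma continuousOn_chi (μ : Fin m → ℝ × ℝ × ℤ) {S : Finset (Fin m)} (hμ : ∀ k ∈ S, μ k = 0) :
    ContinuousOn (chi μ) (UOf S) := by
  refine continuousOn_finsetProd _ fun k _ => ?_
  by_cases hk : k ∈ S
  · simp only [hμ k hk, cpwT_zero_left]
    exact continuousOn_const
  · exact fun x hx => (ContinuousAt.comp (f := fun p : Fin m → ℂ => p k)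
      (continuousAt_cpwT _ (hx k hk)) (continuous_apply k).continuousAt).continuousWithinAt

end Characters

section NormMonomial

variable {n m : ℕ}

/-- Through `Real.rpow`, a vanishing coordinate with exponent `0` contributes `0 ^ 0 = 1`. -/
def normMonomial (e : Fin m → ℝ) (x : Fin m → ℂ) : ℝ := ∏ k, ‖x k‖ ^ e k

lemma normMonomial_mul (e : Fin m → ℝ) (h x : Fin m → ℂ) :
    normMonomial e (h * x) = normMonomial e h * normMonomial e x := by
  simp only [normMonomial, Pi.mul_apply, norm_mul,
    Real.mul_rpow (norm_nonneg _) (norm_nonneg _), Finset.prod_mul_distrib]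

lemma continuous_normMonomial {e : Fin m → ℝ} (he : 0 ≤ e) : Continuous (normMonomial e) :=
  continuous_finsetProd _ fun k _ =>
    (continuous_norm.comp (continuous_apply k)).rpow_const fun _ => Or.inr (he k)

lemma normMonomial_nonneg (e : Fin m → ℝ) (x : Fin m → ℂ) : 0 ≤ normMonomial e x :=
  Finset.prod_nonneg fun _ _ => Real.rpow_nonneg (norm_nonneg _) _

lemma normMonomial_pos {e : Fin m → ℝ} {x : Fin m → ℂ} (h : ∀ k, x k = 0 → e k = 0) :
    0 < normMonomial e x := by
  refine Finset.prod_pos fun k _ => ?_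
  rcases eq_or_ne (x k) 0 with hk | hk
  · simp [hk, h k hk]
  · exact Real.rpow_pos_of_pos (norm_pos_iff.mpr hk) _

lemma normMonomial_eq_zero {e : Fin m → ℝ} {x : Fin m → ℂ} {k : Fin m} (hk : x k = 0)
    (he : e k ≠ 0) : normMonomial e x = 0 :=
  Finset.prod_eq_zero (Finset.mem_univ k) (by simp [hk, Real.zero_rpow he])

lemma normMonomial_of_ne_zero (e : Fin m → ℝ) {x : Fin m → ℂ} (hx : ∀ k, x k ≠ 0) :
    normMonomial e x = Real.exp (∑ k, Real.log ‖x k‖ * e k) := by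
  rw [Real.exp_sum]
  exact Finset.prod_congr rfl fun k _ => Real.rpow_def_of_pos (norm_pos_iff.mpr (hx k)) _

lemma normMonomial_posPart_eq_negPart {t : Fin m → ℝ} {h : Fin m → ℂ} (hh : ∀ k, h k ≠ 0)
    (ht : ∑ k, Real.log ‖h k‖ * t k = 0) : normMonomial t⁺ h = normMonomial t⁻ h := by
  rw [normMonomial_of_ne_zero _ hh, normMonomial_of_ne_zero _ hh, Real.exp_eq_exp,
    ← sub_eq_zero, ← Finset.sum_sub_distrib, ← ht]
  refine Finset.sum_congr rfl fun k _ => ?_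
  rw [← mul_sub, ← Pi.sub_apply, posPart_sub_negPart]

lemma sum_log_norm_smul_eq_zero (β : Fin m → Fin n → ℝ × ℝ × ℤ) {h : Fin m → ℂ}
    (hh : ∀ k, h k ≠ 0) (hker : lamMap β h = 1) :
    ∑ k, Real.log ‖h k‖ • (fun j => (β k j).1) = 0 := by
  funext j
  have hj : normMonomial (fun k => (β k j).1) h = 1 := by
    simpa [lamMap, normMonomial, norm_cpwT _ (hh _)] using congrArg (‖· j‖) hker
  rw [normMonomial_of_ne_zero _ hh, Real.exp_eq_one_iff] at hj
  simpa using hj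

lemma normMonomial_posPart_eq_negPart_of_lamMap_eq_one (β : Fin m → Fin n → ℝ × ℝ × ℤ)
    (f : StrongDual ℝ (Fin n → ℝ)) {h : Fin m → ℂ} (hh : ∀ k, h k ≠ 0)
    (hker : lamMap β h = 1) :
    normMonomial (fun k => f fun j => (β k j).1)⁺ h =
      normMonomial (fun k => f fun j => (β k j).1)⁻ h := by
  refine normMonomial_posPart_eq_negPart hh ?_
  simpa [map_sum, map_smul] using congrArg f (sum_log_norm_smul_eq_zero β hh hker)

end NormMonomial

section Cones

variable {ι E : Type*} [AddCommGroup E] [Module ℝ E]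

lemma mem_hull_image_finset {g : ι → E} {s : Finset ι} {x : E} :
    x ∈ hull ℝ (g '' s) ↔ ∃ r : ι → ℝ, (∀ i ∈ s, 0 ≤ r i) ∧ ∑ i ∈ s, r i • g i = x := by
  rw [Submodule.mem_span_image_finset_iff_exists_fun']
  constructor
  · rintro ⟨c, rfl⟩
    exact ⟨fun i => c i, fun i _ => (c i).2, rfl⟩
  · rintro ⟨r, hr, rfl⟩
    refine ⟨fun i => ⟨max (r i) 0, le_max_right _ _⟩, Finset.sum_congr rfl fun i hi => ?_⟩
    simp [Nonneg.mk_smul, max_eq_left (hr i hi)]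

lemma exists_mem_hull_image_erase {g : ι → E} {s : Finset ι} [DecidableEq ι]
    (hs : ¬LinearIndepOn ℝ g s) {x : E} (hx : x ∈ hull ℝ (g '' s)) :
    ∃ j ∈ s, x ∈ hull ℝ (g '' (s.erase j)) := by
  obtain ⟨r, hr, rfl⟩ := mem_hull_image_finset.mp hx
  obtain ⟨c, hc, hpos⟩ : ∃ c : ι → ℝ, ∑ i ∈ s, c i • g i = 0 ∧ ∃ i ∈ s, 0 < c i := by
    obtain ⟨c, hc, i, hi, hci⟩ := not_linearIndepOn_finset_iff.mp hs
    rcases hci.lt_or_gt with hneg | hpos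
    · exact ⟨-c, by simp [neg_smul, hc], i, hi, by simpa using hneg⟩
    · exact ⟨c, hc, i, hi, hpos⟩
  obtain ⟨j, hj, hmin⟩ := (s.filter (0 < c ·)).exists_min_image (fun i => r i / c i)
    (by simpa [Finset.filter_nonempty_iff] using hpos)
  rw [Finset.mem_filter] at hj
  set τ := r j / c j
  have hτ : 0 ≤ τ := div_nonneg (hr j hj.1) hj.2.le
  refine ⟨j, hj.1, mem_hull_image_finset.mpr ⟨fun i => r i - τ * c i, fun i hi => ?_, ?_⟩⟩
  · have hi := Finset.mem_of_mem_erase hi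
    rcases le_or_gt (c i) 0 with hci | hci
    · nlinarith [hr i hi]
    · have := hmin i (Finset.mem_filter.mpr ⟨hi, hci⟩)
      rw [le_div_iff₀ hci] at this
      linarith
  · rw [Finset.sum_erase _ (by simp [τ, div_mul_cancel₀ _ hj.2.ne']),
      ← sub_eq_zero]
    simp only [sub_smul, Finset.sum_sub_distrib, mul_smul, ← Finset.smul_sum, hc, smul_zero]
    abel

lemma exists_linearIndepOn_of_mem_hull_image {g : ι → E} {s : Finset ι} {x : E}
    (hx : x ∈ hull ℝ (g '' s)) :
    ∃ t ⊆ s, LinearIndepOn ℝ g t ∧ x ∈ hull ℝ (g '' t) := by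
  classical
  induction s using Finset.strongInduction with
  | H s ih =>
    by_cases hs : LinearIndepOn ℝ g s
    · exact ⟨s, subset_rfl, hs, hx⟩
    obtain ⟨j, hj, hxj⟩ := exists_mem_hull_image_erase hs hx
    obtain ⟨t, hts, ht, hxt⟩ := ih _ (Finset.erase_ssubset hj) hxj
    exact ⟨t, hts.trans (Finset.erase_subset _ _), ht, hxt⟩

variable [TopologicalSpace E] [IsTopologicalAddGroup E] [ContinuousSMul ℝ E] [T2Space E]

lemma isClosed_hull_image_of_linearIndepOn {g : ι → E} {t : Finset ι}
    (ht : LinearIndepOn ℝ g t) : IsClosed (hull ℝ (g '' t) : Set E) := by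
  set L := Fintype.linearCombination ℝ (fun i : t => g i)
  have hL : Topology.IsClosedEmbedding L := LinearMap.isClosedEmbedding_of_injective
    (LinearMap.ker_eq_bot.mpr ht.fintypeLinearCombination_injective)
  convert hL.isClosedMap _ (isClosed_Ici (a := (0 : t → ℝ)))
  ext x
  rw [SetLike.mem_coe, Submodule.mem_span_image_finset_iff_exists_fun]
  constructor
  · rintro ⟨c, rfl⟩
    exact ⟨fun i => c i, fun i => (c i).2, by simp [L, Fintype.linearCombination_apply]⟩
  · rintro ⟨q, hq, rfl⟩
    exact ⟨fun i => ⟨q i, hq i⟩, by simp [L, Fintype.linearCombination_apply]⟩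

lemma isClosed_hull_image (g : ι → E) (s : Finset ι) : IsClosed (hull ℝ (g '' s) : Set E) := by
  classical
  have hunion : (hull ℝ (g '' s) : Set E) =
      ⋃ t ∈ s.powerset.filter (fun t : Finset ι => LinearIndepOn ℝ g (t : Set ι)),
        (hull ℝ (g '' t) : Set E) := by
    ext x
    simp only [SetLike.mem_coe, Set.mem_iUnion, Finset.mem_filter, Finset.mem_powerset,
      exists_prop]
    constructor
    · intro hx
      obtain ⟨t, hts, ht, hxt⟩ := exists_linearIndepOn_of_mem_hull_image hx
      exact ⟨t, ⟨hts, ht⟩, hxt⟩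
    · rintro ⟨t, ⟨hts, -⟩, hxt⟩
      exact Submodule.span_mono (Set.image_mono hts) hxt
  rw [hunion]
  exact isClosed_biUnion_finset fun t ht =>
    isClosed_hull_image_of_linearIndepOn (Finset.mem_filter.mp ht).2

lemma exists_dual_of_notMem_hull_image [LocallyConvexSpace ℝ E] {g : ι → E} {s : Finset ι}
    {x : E} (hx : x ∉ hull ℝ (g '' s)) :
    ∃ f : StrongDual ℝ E, (∀ i ∈ s, 0 ≤ f (g i)) ∧ f x < 0 := by
  let C : ProperCone ℝ E := ⟨hull ℝ (g '' s), isClosed_hull_image g s⟩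
  obtain ⟨f, hf, hfx⟩ := C.hyperplane_separation_point (x₀ := x) hx
  exact ⟨f, fun i hi => hf _ (subset_hull (Set.mem_image_of_mem g hi)), hfx⟩

lemma exists_dual_separating_hulls [LocallyConvexSpace ℝ E] {b : ι → E} {I J : Finset ι}
    [DecidableEq ι]
    (hI : LinearIndepOn ℝ b I)
    (hIJ : (hull ℝ (b '' I) : Set E) ∩ hull ℝ (b '' J) ⊆ hull ℝ (b '' ↑(I ∩ J)))
    {i₀ : ι} (hi₀I : i₀ ∈ I) (hi₀J : i₀ ∉ J) :
    ∃ f : StrongDual ℝ E, (∀ i ∈ I, f (b i) ≤ 0) ∧ (∀ j ∈ J, 0 ≤ f (b j)) ∧ f (b i₀) < 0 := by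
  -- If `b i₀ = ∑ⱼ pⱼ bⱼ - ∑ᵢ qᵢ bᵢ`, then `b i₀ + ∑ᵢ qᵢ bᵢ` lies in `∠b_I ∩ ∠b_J = ∠b_{I ∩ J}`,
  -- so independence of `b_I` forces its coefficient `1 + q i₀` at `i₀ ∉ J` to vanish.
  suffices hnot : b i₀ ∉ hull ℝ (Sum.elim b (-b) '' ↑(J.disjSum I)) by
    obtain ⟨f, hf, hfi₀⟩ := exists_dual_of_notMem_hull_image hnot
    refine ⟨f, fun i hi => ?_, fun j hj => ?_, hfi₀⟩
    · simpa using hf (Sum.inr i) (Finset.inr_mem_disjSum.mpr hi)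
    · simpa using hf (Sum.inl j) (Finset.inl_mem_disjSum.mpr hj)
  intro hmem
  obtain ⟨r, hr, hsum⟩ := mem_hull_image_finset.mp hmem
  simp only [Finset.sum_disjSum, Sum.elim_inl, Sum.elim_inr, Pi.neg_apply, smul_neg,
    Finset.sum_neg_distrib, ← sub_eq_add_neg] at hsum
  set q : ι → ℝ := fun i => r (Sum.inr i) + Pi.single (M := fun _ => ℝ) i₀ 1 i
  have hxJ : ∑ j ∈ J, r (Sum.inl j) • b j ∈ hull ℝ (b '' J) :=
    mem_hull_image_finset.mpr ⟨_, fun j hj => hr _ (Finset.inl_mem_disjSum.mpr hj), rfl⟩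
  have hqI : ∑ i ∈ I, q i • b i = ∑ j ∈ J, r (Sum.inl j) • b j := by
    simp only [q, add_smul, Finset.sum_add_distrib, Pi.single_apply, ite_smul, one_smul,
      zero_smul, Finset.sum_ite_eq', if_pos hi₀I, ← hsum]
    abel
  have hxI : ∑ j ∈ J, r (Sum.inl j) • b j ∈ hull ℝ (b '' I) := by
    refine mem_hull_image_finset.mpr ⟨q, fun i hi => ?_, hqI⟩
    have := hr _ (Finset.inr_mem_disjSum.mpr hi)
    simp only [q, Pi.single_apply]
    split_ifs <;> linarith
  obtain ⟨u, -, hu⟩ := mem_hull_image_finset.mp (hIJ ⟨hxI, hxJ⟩)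
  have huI : ∑ i ∈ I, (if i ∈ J then u i else 0) • b i = ∑ j ∈ J, r (Sum.inl j) • b j := by
    rw [← hu, ← Finset.sum_ite_mem]
    simp only [ite_smul, zero_smul]
  have key := linearIndepOn_finset_iff.mp hI (fun i => q i - if i ∈ J then u i else 0)
    (by simp only [sub_smul, Finset.sum_sub_distrib, hqI, huI, sub_self]) i₀ hi₀I
  have := hr _ (Finset.inr_mem_disjSum.mpr hi₀I)
  simp [q, hi₀J] at key
  linarith

end Cones

section LinearAlgebra

lemma LinearIndepOn.exists_dual_eq {ι K V : Type*} [Field K] [AddCommGroup V] [Module K V]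
    {v : ι → V} {s : Set ι} (hv : LinearIndepOn K v s) (t : ι → K) :
    ∃ f : Module.Dual K V, ∀ i ∈ s, f (v i) = t i := by
  obtain ⟨f, hf⟩ := LinearMap.exists_extend
    (Finsupp.linearCombination K (fun i : s => t i) ∘ₗ LinearIndependent.repr hv)
  refine ⟨f, fun i hi => ?_⟩
  have hmem : v i ∈ Submodule.span K (Set.range fun i : s => v i) :=
    Submodule.subset_span ⟨⟨i, hi⟩, rfl⟩
  have := LinearMap.congr_fun hf ⟨v i, hmem⟩
  simp only [LinearMap.coe_comp, Function.comp_apply, Submodule.coe_subtype] at this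
  rw [this, hv.repr_eq_single ⟨i, hi⟩ _ rfl, Finsupp.linearCombination_single, one_smul]

lemma Module.Dual.apply_eq_dotProduct {n : ℕ} (f : Module.Dual ℝ (Fin n → ℝ))
    (x : Fin n → ℝ) : f x = (fun j => f (Pi.single j 1)) ⬝ᵥ x := by
  classical
  rw [LinearMap.pi_apply_eq_sum_univ f x, dotProduct]
  refine Finset.sum_congr rfl fun j _ => ?_
  rw [smul_eq_mul, mul_comm]
  congr 2
  ext i
  simp [Pi.single_apply, eq_comm]

lemma LinearIndepOn.exists_dotProduct_eq {ι : Type*} {n : ℕ} {v : ι → Fin n → ℝ} {s : Set ι}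
    (hv : LinearIndepOn ℝ v s) (t : ι → ℝ) :
    ∃ a : Fin n → ℝ, ∀ i ∈ s, a ⬝ᵥ v i = t i := by
  obtain ⟨f, hf⟩ := hv.exists_dual_eq t
  exact ⟨_, fun i hi => by rw [← Module.Dual.apply_eq_dotProduct, hf i hi]⟩

lemma exists_dotProduct_ne_zero_of_notMem_span {n : ℕ} {p : Submodule ℝ (Fin n → ℝ)}
    {x : Fin n → ℝ} (hx : x ∉ p) :
    ∃ a : Fin n → ℝ, (∀ y ∈ p, a ⬝ᵥ y = 0) ∧ a ⬝ᵥ x ≠ 0 := by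
  obtain ⟨f, hfx, hfp⟩ := Submodule.exists_dual_map_eq_bot_of_notMem hx inferInstance
  refine ⟨_, fun y hy => ?_, by rwa [← Module.Dual.apply_eq_dotProduct]⟩
  rw [← Module.Dual.apply_eq_dotProduct, ← Submodule.mem_bot ℝ, ← hfp]
  exact Submodule.mem_map_of_mem hy

lemma Matrix.exists_eq_sum_add_or_exists_dotProduct {n : ℕ} (C : Matrix (Fin n) (Fin n) ℤ)
    (hC : IsUnit C.det) (T : Finset (Fin n)) (p : ℝ) (x : Fin n → ℝ) :
    (∃ (u : Fin n → ℝ) (M : Fin n → ℤ),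
      x = ∑ t ∈ T, u t • (fun j => (C t j : ℝ)) + p • (fun j => (M j : ℝ))) ∨
    ∃ ξ : Fin n → ℤ, (∀ t ∈ T, C t ⬝ᵥ ξ = 0) ∧ ∀ k : ℤ, (fun j => (ξ j : ℝ)) ⬝ᵥ x ≠ p * k := by
  classical
  set D := C⁻¹
  set u : Fin n → ℝ := fun t => ∑ j, x j * D j t
  have hCD : ∀ s t, C s ⬝ᵥ (fun j => D j t) = if s = t then 1 else 0 := fun s t => by
    simpa [Matrix.mul_apply, dotProduct, Matrix.one_apply] using
      congrFun (congrFun (C.mul_nonsing_inv hC) s) t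
  have hx : x = ∑ t, u t • (fun j => (C t j : ℝ)) := by
    have hDC : ∀ i j, ∑ t, (D i t : ℝ) * C t j = if i = j then 1 else 0 := fun i j => by
      simpa [Matrix.mul_apply, Matrix.one_apply] using
        congrArg (Int.cast : ℤ → ℝ) (congrFun (congrFun (C.nonsing_inv_mul hC) i) j)
    funext j
    simp only [u, Finset.sum_apply, Pi.smul_apply, smul_eq_mul, Finset.sum_mul, mul_assoc]
    rw [Finset.sum_comm]
    simp [← Finset.mul_sum, hDC]
  by_cases hall : ∀ t ∉ T, ∃ k : ℤ, u t = p * k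
  · left
    have hN : ∀ t, ∃ k : ℤ, t ∉ T → u t = p * k := fun t => by
      by_cases ht : t ∈ T
      · exact ⟨0, fun h => (h ht).elim⟩
      · exact (hall t ht).imp fun k hk _ => hk
    choose N hN using hN
    refine ⟨u, ∑ t ∈ Tᶜ, N t • C t, ?_⟩
    rw [hx, ← Finset.sum_add_sum_compl T]
    congr 1
    funext j
    simp only [Finset.sum_apply, Pi.smul_apply, smul_eq_mul, Int.cast_sum, Int.cast_mul,
      Finset.mul_sum]
    refine Finset.sum_congr rfl fun t ht => ?_
    rw [hN t (Finset.mem_compl.mp ht)]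
    ring
  · right
    push Not at hall
    obtain ⟨t₀, ht₀, hu⟩ := hall
    refine ⟨fun j => D j t₀, fun t ht => ?_, fun k => ?_⟩
    · rw [hCD, if_neg (ne_of_mem_of_not_mem ht ht₀)]
    · convert hu k using 1
      simp [u, dotProduct, mul_comm]

end LinearAlgebra

section QuotientSeparation

variable {X Y : Type*} [TopologicalSpace X] [TopologicalSpace Y] [T2Space Y] {r : X → X → Prop}

lemma exists_isOpen_quot_preimage_eq {A : Set X} (hA : IsOpen A)
    (hr : ∀ x y, r x y → (x ∈ A ↔ y ∈ A)) :
    ∃ U : Set (Quot r), IsOpen U ∧ Quot.mk r ⁻¹' U = A :=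
  ⟨{q | Quot.lift (· ∈ A) (fun x y h => propext (hr x y h)) q}, isOpen_coinduced.mpr hA, rfl⟩

lemma separatedNhds_quot_of_invariant {Ω : Set X} {F : X → Y} (hΩ : IsOpen Ω)
    (hF : ContinuousOn F Ω) (hrΩ : ∀ x y, r x y → (x ∈ Ω ↔ y ∈ Ω))
    (hrF : ∀ x y, r x y → x ∈ Ω → F x = F y) {x y : X} (hx : x ∈ Ω) (hy : y ∈ Ω)
    (hxy : F x ≠ F y) : SeparatedNhds {Quot.mk r x} {Quot.mk r y} := by
  have hsat : ∀ W : Set Y, ∀ a b, r a b → (a ∈ Ω ∩ F ⁻¹' W ↔ b ∈ Ω ∩ F ⁻¹' W) := by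
    intro W a b hab
    by_cases ha : a ∈ Ω
    · simp [ha, (hrΩ a b hab).mp ha, hrF a b hab ha]
    · simp [ha, mt (hrΩ a b hab).mpr ha]
  obtain ⟨U, V, hU, hV, hxU, hyV, hUV⟩ := t2_separation hxy
  obtain ⟨U', hU', hU'U⟩ := exists_isOpen_quot_preimage_eq (hF.isOpen_inter_preimage hΩ hU) (hsat U)
  obtain ⟨V', hV', hV'V⟩ := exists_isOpen_quot_preimage_eq (hF.isOpen_inter_preimage hΩ hV) (hsat V)
  refine ⟨U', V', hU', hV', ?_, ?_, ?_⟩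
  · rintro _ rfl
    exact (Set.ext_iff.mp hU'U x).mpr ⟨hx, hxU⟩
  · rintro _ rfl
    exact (Set.ext_iff.mp hV'V y).mpr ⟨hy, hyV⟩
  · refine Disjoint.of_preimage Quot.mk_surjective ?_
    rw [hU'U, hV'V]
    exact (hUV.preimage F).mono Set.inter_subset_right Set.inter_subset_right

end QuotientSeparation

lemma coneOf_eq_hull {n m : ℕ} (b : Fin m → Fin n → ℝ) (I : Finset (Fin m)) :
    coneOf m b I = hull ℝ (b '' I) := by
  classical
  ext x
  rw [SetLike.mem_coe, mem_hull_image_finset]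
  constructor
  · rintro ⟨r, hr, hrI, rfl⟩
    exact ⟨r, fun i _ => hr i,
      Finset.sum_subset (Finset.subset_univ I) fun i _ hi => by simp [hrI i hi]⟩
  · rintro ⟨r, hr, rfl⟩
    refine ⟨fun i => if i ∈ I then r i else 0, fun i => ?_, fun i hi => if_neg hi, ?_⟩
    · dsimp only
      split_ifs with hi
      exacts [hr i hi, le_rfl]
    · simp [ite_smul, Finset.sum_ite_mem]

def zeroSet {m : ℕ} (x : Fin m → ℂ) : Finset (Fin m) := Finset.univ.filter (x · = 0)

@[simp] lemma mem_zeroSet {m : ℕ} {x : Fin m → ℂ} {k : Fin m} : k ∈ zeroSet x ↔ x k = 0 := by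
  simp [zeroSet]

lemma zeroSet_mem_cx {n m : ℕ} {Δ : CompleteNonsingularTopFan n m} (z : USigma Δ) :
    zeroSet z.1 ∈ Δ.cx := by
  obtain ⟨I, hI, hzI⟩ := Set.mem_iUnion₂.mp z.2
  exact Δ.down_closed I hI _ fun k hk => by_contra fun hkI => hzI k hkI (mem_zeroSet.mp hk)


namespace CompleteNonsingularTopFan

variable {n m : ℕ} (Δ : CompleteNonsingularTopFan n m)

def b (k : Fin m) : Fin n → ℝ := fun j => (Δ.β k j).1

def c (k : Fin m) : Fin n → ℝ := fun j => (Δ.β k j).2.1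

def v (k : Fin m) : Fin n → ℤ := fun j => (Δ.β k j).2.2

lemma linearIndepOn_b {S : Finset (Fin m)} (hS : S ∈ Δ.cx) : LinearIndepOn ℝ Δ.b S :=
  Δ.indep S hS

lemma rinner_triple (a γ : Fin n → ℝ) (ξ : Fin n → ℤ) (i : Fin m) :
    rinner (fun j => (a j, γ j, ξ j)) (Δ.β i) =
      (Δ.b i ⬝ᵥ a, Δ.b i ⬝ᵥ γ + Δ.c i ⬝ᵥ (fun j => (ξ j : ℝ)), Δ.v i ⬝ᵥ ξ) := by
  refine Prod.ext ?_ (Prod.ext ?_ ?_) <;>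
    simp [rinner, rmul, dotProduct, Prod.fst_sum, Prod.snd_sum, Finset.sum_add_distrib,
      b, c, v]

lemma separatedNhds_of_eq_zero_of_ne_zero (z w : USigma Δ) {i₀ : Fin m} (hz : z.1 i₀ = 0)
    (hw : w.1 i₀ ≠ 0) :
    SeparatedNhds {Quot.mk (orbitRel Δ) z} {Quot.mk (orbitRel Δ) w} := by
  classical
  have hinter := (Δ.cone_inter _ (zeroSet_mem_cx z) _ (zeroSet_mem_cx w)).subset
  rw [coneOf_eq_hull, coneOf_eq_hull, coneOf_eq_hull] at hinter
  obtain ⟨f, hfz, hfw, hfi₀⟩ := exists_dual_separating_hulls (b := Δ.b)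
    (Δ.linearIndepOn_b (zeroSet_mem_cx z)) hinter (mem_zeroSet.mpr hz) (mt mem_zeroSet.mp hw)
  set t : Fin m → ℝ := fun k => f (Δ.b k)
  set P := normMonomial t⁺
  set Q := normMonomial t⁻
  have hscale : ∀ x y : USigma Δ, orbitRel Δ x y →
      ∃ c > 0, P y.1 = c * P x.1 ∧ Q y.1 = c * Q x.1 := by
    rintro x y ⟨h, hh, hker, hy⟩
    refine ⟨P h, normMonomial_pos fun k hk => absurd hk (hh k), ?_, ?_⟩
    · simp only [P, show y.1 = h * x.1 from funext hy, normMonomial_mul]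
    · simp only [P, Q, show y.1 = h * x.1 from funext hy, normMonomial_mul]
      exact congrArg (· * _) (normMonomial_posPart_eq_negPart_of_lamMap_eq_one Δ.β f hh hker).symm
  have hPz : 0 < P z.1 := normMonomial_pos fun k hk => by
    simpa [t] using hfz k (mem_zeroSet.mpr hk)
  have hQz : Q z.1 = 0 := normMonomial_eq_zero hz (by simpa [t] using hfi₀)
  have hQw : 0 < Q w.1 := normMonomial_pos fun k hk => by
    simpa [t] using hfw k (mem_zeroSet.mpr hk)
  have hP : Continuous P := continuous_normMonomial (posPart_nonneg t)
  have hQ : Continuous Q := continuous_normMonomial (negPart_nonneg t)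
  have hPQ : Continuous fun x : USigma Δ => P x.1 + Q x.1 :=
    (hP.add hQ).comp continuous_subtype_val
  have hΩ : IsOpen {x : USigma Δ | 0 < P x.1 + Q x.1} := isOpen_lt continuous_const hPQ
  have hF : ContinuousOn (fun x : USigma Δ => Q x.1 / (P x.1 + Q x.1))
      {x : USigma Δ | 0 < P x.1 + Q x.1} :=
    (hQ.comp continuous_subtype_val).continuousOn.div hPQ.continuousOn fun x hx => hx.ne'
  refine separatedNhds_quot_of_invariant hΩ hF (fun x y hxy => ?_) (fun x y hxy _ => ?_) ?_ ?_ ?_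
  · obtain ⟨c, hc, hPc, hQc⟩ := hscale x y hxy
    simp only [Set.mem_ofPred_eq, hPc, hQc, ← mul_add, mul_pos_iff_of_pos_left hc]
  · obtain ⟨c, hc, hPc, hQc⟩ := hscale x y hxy
    simp only [hPc, hQc, ← mul_add, mul_div_mul_left _ _ hc.ne']
  · show 0 < P z.1 + Q z.1
    simp [hQz, hPz]
  · show 0 < P w.1 + Q w.1
    linarith [normMonomial_nonneg t⁺ w.1]
  · simp only [hQz, zero_div]
    exact (div_pos hQw (by linarith [normMonomial_nonneg t⁺ w.1])).ne

lemma exists_chi_ne_one_of_notMem_span {S : Finset (Fin m)} {y : Fin n → ℂ}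
    (hy : ∀ j, y j ≠ 0) (hL : (fun j => (log (y j)).re) ∉ Submodule.span ℝ (Δ.b '' S)) :
    ∃ α : Fin n → ℝ × ℝ × ℤ, (∀ i ∈ S, rinner α (Δ.β i) = 0) ∧ chi α y ≠ 1 := by
  obtain ⟨a, ha, haL⟩ := exists_dotProduct_ne_zero_of_notMem_span hL
  refine ⟨fun j => (a j, (0 : Fin n → ℝ) j, (0 : Fin n → ℤ) j), fun i hi => ?_, ?_⟩
  · rw [Δ.rinner_triple, dotProduct_comm,
      ha _ (Submodule.subset_span (Set.mem_image_of_mem _ hi))]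
    simp
  · conv_lhs => rw [show y = fun j => exp (log (y j)) from funext fun j => (exp_log (hy j)).symm]
    rw [chi_triple_exp]
    simpa [← Complex.ofReal_exp, dotProduct_comm] using haL

lemma exists_lamMap_eq_of_eq_sum {S : Finset (Fin m)} {y : Fin n → ℂ} (hy : ∀ j, y j ≠ 0)
    {s θ : Fin m → ℝ} {M : Fin n → ℤ}
    (hL : ∑ i ∈ S, s i • Δ.b i = fun j => (log (y j)).re)
    (hA : (fun j => (log (y j)).im) = ∑ i ∈ S, s i • Δ.c i +
      ∑ i ∈ S, θ i • (fun j => (Δ.v i j : ℝ)) + (2 * Real.pi) • (fun j => (M j : ℝ))) :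
    ∃ h : Fin m → ℂ, (∀ k, h k ≠ 0) ∧ (∀ k ∉ S, h k = 1) ∧ lamMap Δ.β h = y := by
  classical
  refine ⟨fun k => exp (if k ∈ S then s k + θ k * I else 0), fun k => exp_ne_zero _,
    fun k hk => by simp [hk], funext fun j => ?_⟩
  rw [lamMap_exp, ← exp_log (hy j), Complex.exp_eq_exp_iff_exists_int]
  simp only [apply_ite (rsmul _), rsmul_zero, Finset.sum_ite_mem, Finset.univ_inter]
  refine ⟨-M j, Complex.ext ?_ ?_⟩
  · have := congrFun hL j
    simp only [Finset.sum_apply, Pi.smul_apply, smul_eq_mul] at this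
    simp [Complex.re_sum, ← this, b, mul_comm]
  · have := congrFun hA j
    simp only [Finset.sum_apply, Pi.add_apply, Pi.smul_apply, smul_eq_mul] at this
    simp [Complex.im_sum, this, c, v, Finset.sum_add_distrib]
    ring

lemma exists_chi_ne_one_of_dotProduct_ne {S : Finset (Fin m)} (hS : S ∈ Δ.cx) {y : Fin n → ℂ}
    (hy : ∀ j, y j ≠ 0) {s : Fin m → ℝ} (hL : ∑ i ∈ S, s i • Δ.b i = fun j => (log (y j)).re)
    {ξ : Fin n → ℤ} (hξv : ∀ i ∈ S, Δ.v i ⬝ᵥ ξ = 0)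
    (hξ : ∀ k : ℤ, (fun j => (ξ j : ℝ)) ⬝ᵥ
      ((fun j => (log (y j)).im) - ∑ i ∈ S, s i • Δ.c i) ≠ 2 * Real.pi * k) :
    ∃ α : Fin n → ℝ × ℝ × ℤ, (∀ i ∈ S, rinner α (Δ.β i) = 0) ∧ chi α y ≠ 1 := by
  obtain ⟨γ, hγ⟩ := (Δ.linearIndepOn_b hS).exists_dotProduct_eq
    fun i => -(Δ.c i ⬝ᵥ fun j => (ξ j : ℝ))
  refine ⟨fun j => ((0 : Fin n → ℝ) j, γ j, ξ j), fun i hi => ?_, ?_⟩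
  · rw [Δ.rinner_triple, dotProduct_comm (Δ.b i) γ, hγ i hi, hξv i hi]
    simp
  · conv_lhs => rw [show y = fun j => exp (log (y j)) from funext fun j => (exp_log (hy j)).symm]
    rw [chi_triple_exp, Ne, Complex.exp_eq_one_iff]
    rintro ⟨k, hk⟩
    have him : (fun j => (log (y j)).re) ⬝ᵥ γ + (fun j => (log (y j)).im) ⬝ᵥ
        (fun j => (ξ j : ℝ)) = 2 * Real.pi * k := by
      simpa [mul_comm, mul_left_comm] using congrArg Complex.im hk
    have hLγ : (fun j => (log (y j)).re) ⬝ᵥ γ =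
        -∑ i ∈ S, s i * (Δ.c i ⬝ᵥ fun j => (ξ j : ℝ)) := by
      rw [← hL, sum_dotProduct, ← Finset.sum_neg_distrib]
      refine Finset.sum_congr rfl fun i hi => ?_
      rw [smul_dotProduct, dotProduct_comm, hγ i hi, smul_eq_mul, mul_neg]
    apply hξ k
    rw [dotProduct_sub, dotProduct_sum, dotProduct_comm, ← him, hLγ]
    simp only [dotProduct_comm (fun j => (ξ j : ℝ)), smul_dotProduct, smul_eq_mul]
    ring

lemma exists_lamMap_eq_or_exists_chi_ne_one {S : Finset (Fin m)} (hS : S ∈ Δ.cx)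
    {y : Fin n → ℂ} (hy : ∀ j, y j ≠ 0) :
    (∃ h : Fin m → ℂ, (∀ k, h k ≠ 0) ∧ (∀ k ∉ S, h k = 1) ∧ lamMap Δ.β h = y) ∨
      ∃ α : Fin n → ℝ × ℝ × ℤ, (∀ i ∈ S, rinner α (Δ.β i) = 0) ∧ chi α y ≠ 1 := by
  classical
  by_cases hL : (fun j => (log (y j)).re) ∈ Submodule.span ℝ (Δ.b '' S)
  swap
  · exact .inr (Δ.exists_chi_ne_one_of_notMem_span hy hL)
  obtain ⟨s, hs⟩ := (Submodule.mem_span_image_finset_iff_exists_fun' ℝ).mp hL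
  obtain ⟨C, ρ, hC, hρ, hCv⟩ := Δ.nonsingular S hS
  have hv : ∀ i ∈ S, C (ρ i) = Δ.v i := fun i hi => funext (hCv i hi)
  rcases C.exists_eq_sum_add_or_exists_dotProduct hC (S.image ρ) (2 * Real.pi)
    ((fun j => (log (y j)).im) - ∑ i ∈ S, s i • Δ.c i) with ⟨u, M, hu⟩ | ⟨ξ, hξ, hξne⟩
  · refine .inl (Δ.exists_lamMap_eq_of_eq_sum hy (θ := fun i => u (ρ i)) (M := M) hs ?_)
    have hvu : ∑ i ∈ S, u (ρ i) • (fun j => (C (ρ i) j : ℝ)) =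
        ∑ i ∈ S, u (ρ i) • (fun j => (Δ.v i j : ℝ)) :=
      Finset.sum_congr rfl fun i hi => by rw [hv i hi]
    rw [Finset.sum_image fun i hi i' hi' h => hρ hi hi' h, hvu] at hu
    rw [add_assoc, ← hu]
    abel
  · exact .inr (Δ.exists_chi_ne_one_of_dotProduct_ne hS hy hs
      (fun i hi => hv i hi ▸ hξ _ (Finset.mem_image_of_mem ρ hi)) hξne)

lemma orbitRel_of_lamMap_eq {z w : USigma Δ} {g h : Fin m → ℂ} (hg : ∀ k, g k ≠ 0)
    (hwg : w.1 = g * z.1) (hh : ∀ k, h k ≠ 0) (h1 : ∀ k, z.1 k ≠ 0 → h k = 1)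
    (hgh : lamMap Δ.β h = lamMap Δ.β g) : orbitRel Δ z w := by
  refine ⟨g / h, fun k => div_ne_zero (hg k) (hh k), funext fun j => ?_, fun k => ?_⟩
  · have hmul := congrFun (lamMap_mul Δ.β hh (g / h)) j
    rw [show h * (g / h) = g from funext fun k => mul_div_cancel₀ (g k) (hh k), Pi.mul_apply,
      hgh] at hmul
    exact (mul_eq_left₀ (lamMap_ne_zero Δ.β hg j)).mp hmul.symm
  · by_cases hk : z.1 k = 0
    · simp [hwg, hk]
    · simp [hwg, h1 k hk]

lemma separatedNhds_of_chi_ne_one {z w : USigma Δ} {S : Finset (Fin m)} (hz : z.1 ∈ UOf S)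
    {g : Fin m → ℂ} (hg : ∀ k, g k ≠ 0) (hwg : w.1 = g * z.1) {α : Fin n → ℝ × ℝ × ℤ}
    (hαS : ∀ i ∈ S, rinner α (Δ.β i) = 0) (hα : chi α (lamMap Δ.β g) ≠ 1) :
    SeparatedNhds {Quot.mk (orbitRel Δ) z} {Quot.mk (orbitRel Δ) w} := by
  have hFz : chi (fun k => rinner α (Δ.β k)) z.1 ≠ 0 :=
    chi_ne_zero _ fun k hk => hαS k (by_contra fun hkS => hz k hkS hk)
  refine separatedNhds_quot_of_invariant ((isOpen_UOf S).preimage continuous_subtype_val)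
    ((continuousOn_chi _ hαS).comp continuous_subtype_val.continuousOn fun x hx => hx)
    (fun x y hxy => ?_) (fun x y hxy _ => ?_) hz (by rwa [Set.mem_preimage, hwg,
      mul_mem_UOf_iff hg]) ?_
  · obtain ⟨h, hh, -, hy⟩ := hxy
    simp only [Set.mem_preimage, show y.1 = h * x.1 from funext hy, mul_mem_UOf_iff hh]
  · obtain ⟨h, hh, hker, hy⟩ := hxy
    simp only [Function.comp_apply, show y.1 = h * x.1 from funext hy,
      chi_rinner_mul_of_lamMap_eq_one α Δ.β hh hker]
  · intro heq
    apply hα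
    simp only [Function.comp_apply, hwg, chi_mul _ hg, ← chi_lamMap α Δ.β hg] at heq
    exact (mul_eq_right₀ hFz).mp heq.symm

lemma orbitRel_or_separatedNhds_of_zero_iff (z w : USigma Δ)
    (hzw : ∀ k, z.1 k = 0 ↔ w.1 k = 0) :
    orbitRel Δ z w ∨ SeparatedNhds {Quot.mk (orbitRel Δ) z} {Quot.mk (orbitRel Δ) w} := by
  classical
  set g : Fin m → ℂ := fun k => if z.1 k = 0 then 1 else w.1 k / z.1 k
  have hg : ∀ k, g k ≠ 0 := fun k => by
    by_cases hk : z.1 k = 0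
    · simp [g, hk]
    · simp [g, hk, (hzw k).not.mp hk]
  have hwg : w.1 = g * z.1 := funext fun k => by
    by_cases hk : z.1 k = 0
    · simp [g, hk, (hzw k).mp hk]
    · simp [g, hk]
  rcases Δ.exists_lamMap_eq_or_exists_chi_ne_one (zeroSet_mem_cx z) (lamMap_ne_zero Δ.β hg)
    with ⟨h, hh, h1, hlam⟩ | ⟨α, hαS, hα⟩
  · exact .inl (Δ.orbitRel_of_lamMap_eq hg hwg hh (fun k hk => h1 k (mt mem_zeroSet.mp hk)) hlam)
  · exact .inr (Δ.separatedNhds_of_chi_ne_one (fun k hk => mt mem_zeroSet.mpr hk) hg hwg hαS hα)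

lemma orbitRel_or_separatedNhds (z w : USigma Δ) :
    orbitRel Δ z w ∨ SeparatedNhds {Quot.mk (orbitRel Δ) z} {Quot.mk (orbitRel Δ) w} := by
  by_cases hzw : ∀ k, z.1 k = 0 ↔ w.1 k = 0
  · exact Δ.orbitRel_or_separatedNhds_of_zero_iff z w hzw
  obtain ⟨k, hk⟩ := not_forall.mp hzw
  right
  by_cases hz : z.1 k = 0
  · exact Δ.separatedNhds_of_eq_zero_of_ne_zero z w hz fun hw => hk ⟨fun _ => hw, fun _ => hz⟩
  · have hw : w.1 k = 0 := by_contra fun hw => hk ⟨fun h => (hz h).elim, fun h => (hw h).elim⟩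
    exact (Δ.separatedNhds_of_eq_zero_of_ne_zero w z hw hz).symm

end CompleteNonsingularTopFan

/-- the quotient space `X(Δ) = U(Σ)/Ker λ` associated to a complete
non-singular topological fan `Δ` is Hausdorff. -/
theorem XDelta_t2 (n m : ℕ) (Δ : CompleteNonsingularTopFan n m) :
    T2Space (Quot (orbitRel Δ)) := by
  refine (t2Space_iff _).mpr fun p q hpq => ?_
  obtain ⟨z, rfl⟩ := Quot.exists_rep p
  obtain ⟨w, rfl⟩ := Quot.exists_rep q
  rcases Δ.orbitRel_or_separatedNhds z w with hzw | ⟨U, V, hU, hV, hzU, hwV, hUV⟩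
  · exact absurd (Quot.sound hzw) hpq
  · exact ⟨U, V, hU, hV, hzU rfl, hwV rfl, hUV⟩
end
end
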